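/- arXiv:2507.08784 — 3 statements merged into one kernel-verified Lean document; each statement's English description precedes it below -/
import Mathlib

section
/- Let U ∈ ℝ^{m×m} be an orthogonal matrix with columns u₁,…,u_m, let G ∈ ℝ^{m×n}, and let J ⊆ {1,…,m} with |J| = r be a set of indices attaining the r largest values of ‖u_jᵀG‖₂². Set P = U_{:,J} ∈ ℝ^{m×r}. Then ‖G − P Pᵀ G‖_F² ≤ (1 − r/m)‖G‖_F². -/
open Matrix Finset

/-- Squared Frobenius norm. -/
noncomputable def frobSq {m n : ℕ} (M : Matrix (Fin m) (Fin n) ℝ) : ℝ :=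
  ∑ i, ∑ j, (M i j) ^ 2

/-- `colProj U J = P Pᵀ` where `P = U_{:,J}` is the column selection of `U`. -/
noncomputable def colProj {m : ℕ} (U : Matrix (Fin m) (Fin m) ℝ) (J : Finset (Fin m)) :
    Matrix (Fin m) (Fin m) ℝ :=
  ∑ j ∈ J, Matrix.of fun i k => U i j * U k j

/-- `rowEnergy U G j = ‖u_jᵀ G‖₂²`. -/
noncomputable def rowEnergy {m n : ℕ} (U : Matrix (Fin m) (Fin m) ℝ)
    (G : Matrix (Fin m) (Fin n) ℝ) (j : Fin m) : ℝ :=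
  ∑ k, (∑ i, U i j * G i k) ^ 2

lemma orth_sum_sq {m : ℕ} (U : Matrix (Fin m) (Fin m) ℝ) (hU : Uᵀ * U = 1)
    (S : Finset (Fin m)) (c : Fin m → ℝ) :
    ∑ i, (∑ j ∈ S, U i j * c j) ^ 2 = ∑ j ∈ S, (c j) ^ 2 := by
  have hE : ∀ a b, ∑ i, U i a * U i b = if a = b then 1 else 0 := by
    intro a b
    have := congrFun (congrFun hU a) b
    simpa [Matrix.mul_apply, Matrix.transpose_apply, Matrix.one_apply] using this
  calc ∑ i, (∑ j ∈ S, U i j * c j) ^ 2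
      = ∑ i, ∑ j ∈ S, ∑ j' ∈ S, (U i j * c j) * (U i j' * c j') := by
        refine Finset.sum_congr rfl fun i _ => ?_
        rw [sq, Finset.sum_mul_sum]
    _ = ∑ j ∈ S, ∑ j' ∈ S, ∑ i, (U i j * c j) * (U i j' * c j') := by
        rw [Finset.sum_comm]
        exact Finset.sum_congr rfl fun j _ => Finset.sum_comm
    _ = ∑ j ∈ S, ∑ j' ∈ S, (c j * c j') * ∑ i, U i j * U i j' := by
        refine Finset.sum_congr rfl fun j _ => Finset.sum_congr rfl fun j' _ => ?_
        rw [Finset.mul_sum]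
        exact Finset.sum_congr rfl fun i _ => by ring
    _ = ∑ j ∈ S, (c j) ^ 2 := by
        refine Finset.sum_congr rfl fun j hj => ?_
        rw [Finset.sum_eq_single j]
        · rw [hE j j, if_pos rfl]; ring
        · intro j' _ hne; rw [hE j j', if_neg fun h => hne h.symm, mul_zero]
        · intro h; exact absurd hj h

/-- Greedy top-`r` column selection from an orthogonal matrix yields a contractive
rank-`r` compressor with factor `δ = r/m`. -/
theorem greedy_top_r_contractive {m n r : ℕ}
    (U : Matrix (Fin m) (Fin m) ℝ) (hU : Uᵀ * U = 1) (hU' : U * Uᵀ = 1)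
    (G : Matrix (Fin m) (Fin n) ℝ) (J : Finset (Fin m)) (hJ : J.card = r)
    (htop : ∀ j ∈ J, ∀ j' ∉ J, rowEnergy U G j' ≤ rowEnergy U G j) :
    frobSq (G - colProj U J * G) ≤ (1 - (r : ℝ) / m) * frobSq G := by
  set e : Fin m → ℝ := rowEnergy U G with he_def
  set c : Fin m → Fin n → ℝ := fun j k => ∑ i, U i j * G i k with hc_def
  have hE' : ∀ a b, ∑ j, U a j * U b j = if a = b then 1 else 0 := by
    intro a b
    have := congrFun (congrFun hU' a) b
    simpa [Matrix.mul_apply, Matrix.transpose_apply, Matrix.one_apply] using this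
  -- reconstruction: G i k = ∑ j, U i j * c j k
  have hrec : ∀ i k, G i k = ∑ j, U i j * c j k := by
    intro i k
    calc G i k = ∑ l, (if i = l then (1:ℝ) else 0) * G l k := by
          simp
      _ = ∑ l, (∑ j, U i j * U l j) * G l k := by
          refine Finset.sum_congr rfl fun l _ => by rw [hE' i l]
      _ = ∑ j, U i j * c j k := by
          simp_rw [hc_def, Finset.sum_mul, Finset.mul_sum]
          rw [Finset.sum_comm]
          exact Finset.sum_congr rfl fun j _ => Finset.sum_congr rfl fun l _ => by ring
  -- entries of the residual
  have hres : ∀ i k, (G - colProj U J * G) i k = ∑ j ∈ Jᶜ, U i j * c j k := by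
    intro i k
    have hproj : (colProj U J * G) i k = ∑ j ∈ J, U i j * c j k := by
      simp only [colProj, Matrix.mul_apply, Matrix.sum_apply, Matrix.of_apply, hc_def]
      simp_rw [Finset.sum_mul]
      rw [Finset.sum_comm]
      refine Finset.sum_congr rfl fun j _ => ?_
      rw [Finset.mul_sum]
      exact Finset.sum_congr rfl fun l _ => by ring
    have : (G - colProj U J * G) i k = G i k - (colProj U J * G) i k := rfl
    rw [this, hproj, hrec i k, ← Finset.sum_compl_add_sum J (fun j => U i j * c j k)]
    ring
  -- frobSq of residual = sum of energies over Jᶜ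
  have hfr1 : frobSq (G - colProj U J * G) = ∑ j ∈ Jᶜ, e j := by
    unfold frobSq
    rw [Finset.sum_comm]
    calc ∑ k, ∑ i, ((G - colProj U J * G) i k) ^ 2
        = ∑ k, ∑ j ∈ Jᶜ, (c j k) ^ 2 := by
          refine Finset.sum_congr rfl fun k _ => ?_
          calc ∑ i, ((G - colProj U J * G) i k) ^ 2
              = ∑ i, (∑ j ∈ Jᶜ, U i j * c j k) ^ 2 :=
                Finset.sum_congr rfl fun i _ => by rw [hres]
            _ = ∑ j ∈ Jᶜ, (c j k) ^ 2 := orth_sum_sq U hU Jᶜ (fun j => c j k)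
      _ = ∑ j ∈ Jᶜ, e j := by
          rw [Finset.sum_comm]
          rfl
  have hfr2 : frobSq G = ∑ j, e j := by
    unfold frobSq
    rw [Finset.sum_comm]
    calc ∑ k, ∑ i, (G i k) ^ 2
        = ∑ k, ∑ j, (c j k) ^ 2 := by
          refine Finset.sum_congr rfl fun k _ => ?_
          calc ∑ i, (G i k) ^ 2
              = ∑ i, (∑ j, U i j * c j k) ^ 2 :=
                Finset.sum_congr rfl fun i _ => by rw [← hrec]
            _ = ∑ j, (c j k) ^ 2 := orth_sum_sq U hU Finset.univ (fun j => c j k)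
      _ = ∑ j, e j := by rw [Finset.sum_comm]; rfl
  rw [hfr1, hfr2]
  -- now the averaging argument
  have he0 : ∀ j, 0 ≤ e j := fun j => Finset.sum_nonneg fun k _ => sq_nonneg _
  have hrm : r ≤ m := by
    have := Finset.card_le_univ J
    simpa [hJ] using this
  rcases Nat.eq_zero_or_pos m with hm0 | hm0
  · subst hm0
    have h1 : ∑ j ∈ Jᶜ, e j = 0 := Finset.sum_eq_zero fun j _ => j.elim0
    simp [h1]
  have hmR : (0:ℝ) < m := by exact_mod_cast hm0
  set SJ := ∑ j ∈ J, e j with hSJ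
  set SC := ∑ j ∈ Jᶜ, e j with hSC
  have hSJ0 : 0 ≤ SJ := Finset.sum_nonneg fun j _ => he0 j
  have hSC0 : 0 ≤ SC := Finset.sum_nonneg fun j _ => he0 j
  have hcardC : (Jᶜ).card = m - r := by
    rw [Finset.card_compl, hJ]; simp
  have key : (r:ℝ) * SC ≤ ((m:ℝ) - r) * SJ := by
    have h1 : ∑ j ∈ J, ∑ j' ∈ Jᶜ, e j' ≤ ∑ j ∈ J, ∑ j' ∈ Jᶜ, e j :=
      Finset.sum_le_sum fun j hj => Finset.sum_le_sum fun j' hj' =>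
        htop j hj j' (Finset.mem_compl.mp hj')
    have hL : ∑ j ∈ J, ∑ j' ∈ Jᶜ, e j' = (r:ℝ) * SC := by
      rw [Finset.sum_const, hJ, nsmul_eq_mul]
    have hR : ∑ j ∈ J, ∑ j' ∈ Jᶜ, e j = ((m:ℝ) - r) * SJ := by
      simp_rw [Finset.sum_const, hcardC, nsmul_eq_mul]
      rw [← Finset.mul_sum, Nat.cast_sub hrm]
    rw [hL, hR] at h1
    exact h1
  have hsplit : ∑ j, e j = SC + SJ := (Finset.sum_compl_add_sum J e).symm
  rw [hsplit]
  have h2 : (r:ℝ)/m * (SC + SJ) ≤ SJ := by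
    rw [div_mul_eq_mul_div, div_le_iff₀ hmR]
    nlinarith [key, hSJ0]
  nlinarith [h2]
end

section
/- Let ξ₁,…,ξ_m be independent with ξ_j ∼ N(0, σ_j²). If σ_i ≥ σ_j, then P(|ξ_i| is among the k largest of |ξ₁|,…,|ξ_m|) ≥ P(|ξ_j| is among the k largest of |ξ₁|,…,|ξ_m|). -/
open MeasureTheory ProbabilityTheory
open scoped NNReal

/-- For independent centered Gaussians `ξ_j ∼ N(0, σ_j²)`, the probability that
`|ξ_i|` is among the `k` largest of `|ξ₁|,…,|ξ_m|` (i.e. fewer than `k` of the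
absolute values strictly exceed it) is monotone nondecreasing in `σ_i`. -/
theorem gaussian_topk_prob_monotone {Ω : Type*} [MeasureSpace Ω]
    [IsProbabilityMeasure (ℙ : Measure Ω)]
    {m : ℕ} (ξ : Fin m → Ω → ℝ) (σ : Fin m → ℝ≥0)
    (hindep : iIndepFun ξ ℙ)
    (hgauss : ∀ j, Measure.map (ξ j) ℙ = gaussianReal 0 (σ j ^ 2))
    (k : ℕ) (i j : Fin m) (hσ : σ j ≤ σ i) :
    ℙ {ω | (Finset.univ.filter fun l => |ξ j ω| < |ξ l ω|).card < k} ≤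
    ℙ {ω | (Finset.univ.filter fun l => |ξ i ω| < |ξ l ω|).card < k} := by
  classical
  -- each ξ l is a.e.-measurable
  have haem : ∀ l, AEMeasurable (ξ l) ℙ := by
    intro l
    by_contra h
    have h1 : (gaussianReal 0 (σ l ^ 2)) Set.univ = 1 := measure_univ
    rw [← hgauss l, Measure.map_of_not_aemeasurable h] at h1
    simp at h1
  rcases eq_or_ne i j with rfl | hij
  · exact le_refl _
  by_cases hσj : σ j = 0
  · -- ξ j = 0 a.s., so the event for j contains (a.e.) the event for i
    have hz : ∀ᵐ ω ∂ℙ, ξ j ω = 0 := by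
      have hm : Measure.map (ξ j) ℙ = Measure.dirac 0 := by
        rw [hgauss j, hσj]
        simp [gaussianReal_zero_var]
      have h0 : ℙ (ξ j ⁻¹' ({0}ᶜ)) = 0 := by
        rw [← Measure.map_apply_of_aemeasurable (haem j) (MeasurableSet.compl (measurableSet_singleton 0)), hm]
        simp
      rw [ae_iff]
      convert h0 using 2
      ext ω; simp
    refine measure_mono_ae ?_
    filter_upwards [hz] with ω hω hA
    refine lt_of_le_of_lt (Finset.card_le_card ?_) hA
    intro l hl
    simp only [Finset.mem_filter, Finset.mem_univ, true_and] at hl ⊢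
    calc |ξ j ω| = 0 := by rw [hω]; simp
    _ ≤ |ξ i ω| := abs_nonneg _
    _ < |ξ l ω| := hl
  · -- main case : 0 < σ j ≤ σ i
    have hσj' : (0 : ℝ) < σ j := NNReal.coe_pos.2 (lt_of_le_of_ne zero_le (Ne.symm hσj))
    have hσi' : (0 : ℝ) < σ i := lt_of_lt_of_le hσj' (NNReal.coe_le_coe.2 hσ)
    -- measurable modifications
    set ξ' : Fin m → Ω → ℝ := fun l => (haem l).mk (ξ l) with hξ'def
    have hξ'm : ∀ l, Measurable (ξ' l) := fun l => (haem l).measurable_mk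
    have hall : ∀ᵐ ω ∂ℙ, ∀ l, ξ l ω = ξ' l ω := ae_all_iff.2 fun l => (haem l).ae_eq_mk
    have hgauss' : ∀ l, Measure.map (ξ' l) ℙ = gaussianReal 0 (σ l ^ 2) := fun l =>
      (Measure.map_congr (haem l).ae_eq_mk).symm.trans (hgauss l)
    have hindep' : iIndepFun ξ' ℙ := by
      rw [iIndepFun_iff_measure_inter_preimage_eq_mul] at hindep ⊢
      intro S sets hsets
      have h1 : ℙ (⋂ l ∈ S, ξ' l ⁻¹' sets l) = ℙ (⋂ l ∈ S, ξ l ⁻¹' sets l) :=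
        measure_congr (Filter.eventuallyEq_set.2 (by
          filter_upwards [hall] with ω hω
          simp [hω]))
      rw [h1, hindep S hsets]
      refine Finset.prod_congr rfl fun l _ => ?_
      exact measure_congr (Filter.eventuallyEq_set.2 (by
        filter_upwards [hall] with ω hω
        simp [hω]))
    -- the swap-and-rescale map
    set a : Fin m → ℝ := fun l =>
      if l = i then ((σ i : ℝ) / σ j) else if l = j then ((σ j : ℝ) / σ i) else 1 with hadef
    set e : Equiv.Perm (Fin m) := Equiv.swap i j with hedef
    have he : ∀ l, e (e l) = l := fun l => Equiv.swap_apply_self i j l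
    have hei : e i = j := Equiv.swap_apply_left i j
    have hej : e j = i := Equiv.swap_apply_right i j
    have haj : a j = (σ j : ℝ) / σ i := by simp [hadef, if_neg hij.symm]
    have hai : a i = (σ i : ℝ) / σ j := by simp [hadef]
    set X : Ω → (Fin m → ℝ) := fun ω l => ξ' l ω with hXdef
    set Y : Ω → (Fin m → ℝ) := fun ω l => a l * ξ' (e l) ω with hYdef
    have hXm : Measurable X := measurable_pi_lambda _ fun l => hξ'm l
    have hYm : Measurable Y := measurable_pi_lambda _ fun l => (hξ'm (e l)).const_mul _
    -- joint laws
    have hvar : ∀ l, (@HMul.hMul ℝ≥0 ℝ≥0 ℝ≥0 _ ⟨a (e l) ^ 2, sq_nonneg _⟩ (σ l ^ 2)) = σ (e l) ^ 2 := by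
      intro l
      apply NNReal.coe_injective
      refine (NNReal.coe_mul _ _).trans ?_
      show a (e l) ^ 2 * ((σ l ^ 2 : ℝ≥0) : ℝ) = _
      rw [NNReal.coe_pow, NNReal.coe_pow]
      rcases eq_or_ne l i with rfl | hli
      · rw [hei, haj, div_pow, div_mul_cancel₀ _ (pow_ne_zero 2 hσi'.ne')]
      rcases eq_or_ne l j with rfl | hlj
      · rw [hej, hai, div_pow, div_mul_cancel₀ _ (pow_ne_zero 2 hσj'.ne')]
      · rw [Equiv.swap_apply_of_ne_of_ne hli hlj]
        simp [hadef, hli, hlj]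
    have hX : Measure.pi (fun l => gaussianReal 0 (σ l ^ 2)) = Measure.map X ℙ := by
      refine Measure.pi_eq fun s hs => ?_
      rw [Measure.map_apply hXm (MeasurableSet.univ_pi hs)]
      have h1 : X ⁻¹' Set.pi Set.univ s = ⋂ l, ξ' l ⁻¹' s l := by
        ext ω
        simp [hXdef, Set.mem_pi]
      rw [h1, hindep'.meas_iInter fun l => ⟨s l, hs l, rfl⟩]
      refine Finset.prod_congr rfl fun l _ => ?_
      rw [← hgauss' l, Measure.map_apply (hξ'm l) (hs l)]
    have hY : Measure.pi (fun l => gaussianReal 0 (σ l ^ 2)) = Measure.map Y ℙ := by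
      refine Measure.pi_eq fun s hs => ?_
      rw [Measure.map_apply hYm (MeasurableSet.univ_pi hs)]
      have h1 : Y ⁻¹' Set.pi Set.univ s = ⋂ l, ξ' l ⁻¹' ((fun x => a (e l) * x) ⁻¹' s (e l)) := by
        ext ω
        simp only [Set.mem_preimage, Set.mem_pi, Set.mem_univ, true_implies, Set.mem_iInter,
          hYdef]
        constructor
        · intro h l
          have h2 := h (e l)
          rwa [he l] at h2
        · intro h l
          have h2 := h (e l)
          rwa [he l] at h2
      rw [h1, hindep'.meas_iInter fun l =>
        ⟨(fun x => a (e l) * x) ⁻¹' s (e l), (measurable_const_mul (a (e l))) (hs (e l)), rfl⟩]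
      have hfac : ∀ l, ℙ (ξ' l ⁻¹' ((fun x => a (e l) * x) ⁻¹' s (e l)))
          = gaussianReal 0 (σ (e l) ^ 2) (s (e l)) := by
        intro l
        have hmap : (Measure.map (ξ' l) ℙ).map (fun x => a (e l) * x)
            = gaussianReal 0 (σ (e l) ^ 2) := by
          rw [hgauss' l, gaussianReal_map_const_mul (a (e l)), mul_zero]
          congr 1
          exact hvar l
        calc ℙ (ξ' l ⁻¹' ((fun x => a (e l) * x) ⁻¹' s (e l)))
            = Measure.map (ξ' l) ℙ ((fun x => a (e l) * x) ⁻¹' s (e l)) :=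
              (Measure.map_apply (hξ'm l) ((measurable_const_mul (a (e l))) (hs (e l)))).symm
          _ = (Measure.map (ξ' l) ℙ).map (fun x => a (e l) * x) (s (e l)) :=
              (Measure.map_apply (measurable_const_mul _) (hs (e l))).symm
          _ = gaussianReal 0 (σ (e l) ^ 2) (s (e l)) := by rw [hmap]
      rw [Finset.prod_congr rfl fun l _ => hfac l]
      exact Equiv.prod_comp e fun l => gaussianReal 0 (σ l ^ 2) (s l)
    -- measurability of the target sets
    have hS : ∀ r : Fin m, MeasurableSet
        {x : Fin m → ℝ | (Finset.univ.filter fun l => |x r| < |x l|).card < k} := by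
      intro r
      have hc : Measurable fun x : Fin m → ℝ =>
          (Finset.univ.filter fun l => |x r| < |x l|).card := by
        simp_rw [Finset.card_filter]
        exact Finset.measurable_sum _ fun l _ => Measurable.ite
          (measurableSet_lt ((measurable_pi_apply r).abs) ((measurable_pi_apply l).abs))
          measurable_const measurable_const
      exact hc measurableSet_Iio
    -- pointwise inclusion
    have hsub : Y ⁻¹' {x : Fin m → ℝ | (Finset.univ.filter fun l => |x j| < |x l|).card < k}
        ⊆ X ⁻¹' {x : Fin m → ℝ | (Finset.univ.filter fun l => |x i| < |x l|).card < k} := by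
      intro ω h
      simp only [Set.mem_preimage, Set.mem_setOf_eq] at h ⊢
      have hYj : |Y ω j| ≤ |ξ' i ω| := by
        rw [hYdef]
        simp only [haj, hej]
        rw [abs_mul, abs_of_pos (div_pos hσj' hσi')]
        exact mul_le_of_le_one_left (abs_nonneg _)
          ((div_le_one hσi').2 (NNReal.coe_le_coe.2 hσ))
      refine lt_of_le_of_lt (Finset.card_le_card_of_injOn e (fun l hl => ?_)
        (e.injective.injOn)) h
      simp only [Finset.coe_filter, Set.mem_setOf_eq, Finset.mem_filter, Finset.mem_univ, true_and, hXdef] at hl ⊢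
      rcases eq_or_ne l i with rfl | hli
      · exact absurd hl (lt_irrefl _)
      rcases eq_or_ne l j with hlj | hlj
      · rw [hlj, hej]
        have hYi : |ξ' j ω| ≤ |Y ω i| := by
          rw [hYdef]
          simp only [hai, hei]
          rw [abs_mul, abs_of_pos (div_pos hσi' hσj')]
          exact le_mul_of_one_le_left (abs_nonneg _) ((one_le_div hσj').2
            (NNReal.coe_le_coe.2 hσ))
        rw [hlj] at hl
        exact lt_of_le_of_lt hYj (lt_of_lt_of_le hl hYi)
      · have hel : e l = l := Equiv.swap_apply_of_ne_of_ne hli hlj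
        rw [hel]
        have hYl : Y ω l = ξ' l ω := by
          rw [hYdef]
          simp [hadef, hli, hlj, hel]
        rw [hYl]
        exact lt_of_le_of_lt hYj hl
    -- assemble
    have eX : ∀ r : Fin m,
        ℙ {ω | (Finset.univ.filter fun l => |ξ r ω| < |ξ l ω|).card < k}
          = Measure.map X ℙ {x | (Finset.univ.filter fun l => |x r| < |x l|).card < k} := by
      intro r
      rw [Measure.map_apply hXm (hS r)]
      refine measure_congr (Filter.eventuallyEq_set.2 ?_)
      filter_upwards [hall] with ω hω
      simp [hXdef, hω]
    calc ℙ {ω | (Finset.univ.filter fun l => |ξ j ω| < |ξ l ω|).card < k}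
        = Measure.map X ℙ {x | (Finset.univ.filter fun l => |x j| < |x l|).card < k} := eX j
      _ = Measure.map Y ℙ {x | (Finset.univ.filter fun l => |x j| < |x l|).card < k} := by
          rw [← hX, ← hY]
      _ = ℙ (Y ⁻¹' {x | (Finset.univ.filter fun l => |x j| < |x l|).card < k}) :=
          Measure.map_apply hYm (hS j)
      _ ≤ ℙ (X ⁻¹' {x | (Finset.univ.filter fun l => |x i| < |x l|).card < k}) :=
          measure_mono hsub
      _ = Measure.map X ℙ {x | (Finset.univ.filter fun l => |x i| < |x l|).card < k} :=
          (Measure.map_apply hXm (hS i)).symm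
      _ = ℙ {ω | (Finset.univ.filter fun l => |ξ i ω| < |ξ l ω|).card < k} := (eX i).symm
end

section
/- Let f : ℝ^{2×2} → ℝ be defined on diagonal matrices by f(diag(x,y)) = Lx²/2 + Ly²/4 with L > 0. Starting from (x₀,y₀) = (1,1), run τ steps of the update (x_{k+1}, y_{k+1}) = (x_k − γ L x_k, y_k) with γ = 1/(2L) (gradient descent with the gradient compressed onto the first coordinate axis). Then (x_τ, y_τ) = (2^{−τ}, 1), and the ratio ‖C(∇f(x_τ,y_τ))‖_F² / ‖∇f(x_τ,y_τ)‖_F² = 2^{−2τ} / (2^{−2τ} + 1/4), where C projects onto the first coordinate; in particular this ratio tends to 0 as τ → ∞. -/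
/-- Explicit counterexample: for `f(diag(x,y)) = Lx²/2 + Ly²/4`, gradient descent
from `(1,1)` with step `γ = 1/(2L)` and the gradient compressed onto the first
coordinate axis gives `(x_τ, y_τ) = (2^{−τ}, 1)`, and the captured energy ratio
`‖C(∇f)‖_F²/‖∇f‖_F² = 2^{−2τ}/(2^{−2τ} + 1/4)` tends to `0`. -/
theorem fixed_projector_energy_ratio_vanishes
    (L : ℝ) (hL : 0 < L) (γ : ℝ) (hγ : γ = 1 / (2 * L))
    (f : ℝ → ℝ → ℝ) (hf : ∀ x y, f x y = L * x ^ 2 / 2 + L * y ^ 2 / 4)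
    (x y : ℕ → ℝ) (hx0 : x 0 = 1) (hy0 : y 0 = 1)
    (hx : ∀ k, x (k + 1) = x k - γ * (L * x k))
    (hy : ∀ k, y (k + 1) = y k) :
    (∀ τ : ℕ, x τ = (2 : ℝ) ^ (-(τ : ℤ)) ∧ y τ = 1) ∧
    (∀ τ : ℕ,
      (L * x τ) ^ 2 / ((L * x τ) ^ 2 + (L * y τ / 2) ^ 2)
        = (2 : ℝ) ^ (-(2 * τ : ℤ)) / ((2 : ℝ) ^ (-(2 * τ : ℤ)) + 1 / 4)) ∧
    Filter.Tendsto
      (fun τ : ℕ => (L * x τ) ^ 2 / ((L * x τ) ^ 2 + (L * y τ / 2) ^ 2))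
      Filter.atTop (nhds 0) := by
  have hLne : L ≠ 0 := ne_of_gt hL
  have key : ∀ τ : ℕ, x τ = (2 : ℝ) ^ (-(τ : ℤ)) ∧ y τ = 1 := by
    intro τ
    induction τ with
    | zero => simpa using ⟨hx0, hy0⟩
    | succ k ih =>
      obtain ⟨ihx, ihy⟩ := ih
      constructor
      · rw [hx k, ihx, hγ]
        have : (1 : ℝ) / (2 * L) * (L * (2:ℝ) ^ (-(k : ℤ))) = (2:ℝ) ^ (-(k : ℤ)) / 2 := by
          field_simp
        rw [this]
        rw [show (-((k:ℕ)+1 : ℕ) : ℤ) = -(k:ℤ) + (-1) by push_cast; ring,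
          zpow_add₀ (by norm_num : (2:ℝ) ≠ 0), zpow_neg_one]
        norm_num
        ring
      · rw [hy k, ihy]
  have ratio : ∀ τ : ℕ,
      (L * x τ) ^ 2 / ((L * x τ) ^ 2 + (L * y τ / 2) ^ 2)
        = (2 : ℝ) ^ (-(2 * τ : ℤ)) / ((2 : ℝ) ^ (-(2 * τ : ℤ)) + 1 / 4) := by
    intro τ
    obtain ⟨hxτ, hyτ⟩ := key τ
    rw [hxτ, hyτ]
    have h2 : ((2:ℝ) ^ (-(τ : ℤ))) ^ 2 = (2:ℝ) ^ (-(2 * τ : ℤ)) := by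
      rw [← zpow_natCast (((2:ℝ)) ^ (-(τ : ℤ))) 2, ← zpow_mul]
      ring_nf
    have hdpos : (0:ℝ) < (2 : ℝ) ^ (-(2 * τ : ℤ)) + 1 / 4 := by positivity
    have : (L * (2:ℝ) ^ (-(τ : ℤ))) ^ 2 = L ^ 2 * (2:ℝ) ^ (-(2 * τ : ℤ)) := by
      rw [mul_pow, h2]
    rw [this]
    have : (L * 1 / 2) ^ 2 = L ^ 2 * (1/4) := by ring
    rw [this, ← mul_add, mul_div_mul_left _ _ (pow_ne_zero 2 hLne)]
  refine ⟨key, ratio, ?_⟩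
  have : Filter.Tendsto (fun τ : ℕ => (2 : ℝ) ^ (-(2 * τ : ℤ)) / ((2 : ℝ) ^ (-(2 * τ : ℤ)) + 1 / 4))
      Filter.atTop (nhds 0) := by
    have hnum : Filter.Tendsto (fun τ : ℕ => (2 : ℝ) ^ (-(2 * τ : ℤ))) Filter.atTop (nhds 0) := by
      have : ∀ τ : ℕ, (2 : ℝ) ^ (-(2 * τ : ℤ)) = (1/4 : ℝ) ^ τ := by
        intro τ
        rw [← zpow_natCast ((1:ℝ)/4) τ]
        rw [show ((1:ℝ)/4) = (2:ℝ) ^ (-2 : ℤ) by norm_num, ← zpow_mul]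
        ring_nf
      simp only [this]
      exact tendsto_pow_atTop_nhds_zero_of_lt_one (by norm_num) (by norm_num)
    have hden : Filter.Tendsto (fun τ : ℕ => (2 : ℝ) ^ (-(2 * τ : ℤ)) + 1 / 4)
        Filter.atTop (nhds (1/4)) := by
      simpa using hnum.add tendsto_const_nhds
    convert hnum.div hden (by norm_num) using 2
    all_goals norm_num
  exact Filter.Tendsto.congr (fun τ => (ratio τ).symm) this
end
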